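/- For σ, μ ∈ S_n, (σ, μ) ∈ ρ if and only if there exist pairwise disjoint sections J₁, …, J_t of σ with J₁ ∪ ⋯ ∪ J_t = {1,…,n} such that, for each i ∈ {1,…,t}, the restriction μ|_{J_i} equals σ|_{J_i} or (σ|_{J_i})⁻¹. -/

import Mathlib

/-- `I` is closed with respect to `σ`: `σ i ∈ I` for all `i ∈ I`. -/
def PermClosed {n : ℕ} (σ : Equiv.Perm (Fin n)) (I : Set (Fin n)) : Prop :=
  ∀ i ∈ I, σ i ∈ I

/-- `I` is a section of `σ`: a nonempty interval `{u,…,v}` such that `I`, `{x | x < u}`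
and `{x | v < x}` are all closed with respect to `σ`. -/
def IsSection {n : ℕ} (σ : Equiv.Perm (Fin n)) (I : Set (Fin n)) : Prop :=
  ∃ u v : Fin n, u ≤ v ∧ I = Set.Icc u v ∧
    PermClosed σ I ∧ PermClosed σ {x | x < u} ∧ PermClosed σ {x | v < x}

/-- `I` is a segment of `σ`: a section minimal with respect to inclusion. -/
def IsSegment {n : ℕ} (σ : Equiv.Perm (Fin n)) (I : Set (Fin n)) : Prop :=
  IsSection σ I ∧ ∀ J : Set (Fin n), IsSection σ J → J ⊆ I → J = I

/-- `Seg σ`, the set of all segments of `σ`. -/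
def Seg {n : ℕ} (σ : Equiv.Perm (Fin n)) : Set (Set (Fin n)) :=
  {I | IsSegment σ I}

/-- `σ` and `μ` are sectionally inverted or equal: they have the same segments and on
each segment `μ` coincides with `σ` or with `σ⁻¹`. -/
def Rho {n : ℕ} (σ μ : Equiv.Perm (Fin n)) : Prop :=
  Seg σ = Seg μ ∧ ∀ I ∈ Seg σ, (∀ i ∈ I, μ i = σ i) ∨ (∀ i ∈ I, μ i = σ⁻¹ i)

/-!
Call `c` a cut of `σ` when the first `c` points form a `σ`-closed set; the sections of `σ` are
exactly the intervals `[c, d)` between cuts `c < d`. Two sections that meet intersect in a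
section, so a segment lies inside every section it meets: segments are pairwise disjoint, and a
section minimal around a point `x` is a segment, since a smaller section missing `x` would give a
cut splitting off a still smaller section around `x`. Conversely, if `μ` agrees with `σ` or `σ⁻¹`
on each block of a cover by `σ`-closed sets, then `σ` and `μ` have the same closed sets, hence the
same sections and segments, and each segment lies inside a block.
-/

open Set Equiv

namespace PermClosed

variable {n : ℕ} {σ μ : Perm (Fin n)} {I J : Set (Fin n)}

theorem inv (h : PermClosed σ I) : PermClosed σ⁻¹ I :=
  Perm.perm_symm_mapsTo_of_mapsTo σ h

theorem compl (h : PermClosed σ I) : PermClosed σ Iᶜ :=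
  fun i hi hσi => hi (by simpa using h.inv _ hσi)

theorem inter (hI : PermClosed σ I) (hJ : PermClosed σ J) : PermClosed σ (I ∩ J) :=
  fun i hi => ⟨hI i hi.1, hJ i hi.2⟩

theorem of_forall_eq_or_eq_inv (hμ : ∀ k, μ k = σ k ∨ μ k = σ⁻¹ k) (h : PermClosed σ I) :
    PermClosed μ I :=
  fun k hk => (hμ k).elim (fun e => e ▸ h k hk) (fun e => e ▸ h.inv k hk)

theorem eqOn_or_eqOn_inv_swap (hJ : PermClosed σ J) (h : EqOn μ σ J ∨ EqOn μ ⇑σ⁻¹ J) :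
    EqOn σ μ J ∨ EqOn σ ⇑μ⁻¹ J :=
  h.imp EqOn.symm fun h k hk => Perm.eq_inv_iff_eq.2 (by simpa using h (hJ k hk))

end PermClosed

section Sections

variable {n : ℕ} {σ : Perm (Fin n)} {I K : Set (Fin n)}

variable (σ) in
def IsCut (c : ℕ) : Prop := PermClosed σ {x : Fin n | (x : ℕ) < c}

theorem isSection_iff_exists_isCut :
    IsSection σ I ↔ ∃ c d, c < d ∧ d ≤ n ∧ IsCut σ c ∧ IsCut σ d ∧ I = Fin.val ⁻¹' Ico c d := by
  constructor
  · rintro ⟨u, v, huv, rfl, -, hu, hv⟩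
    refine ⟨u, v + 1, Nat.lt_succ_of_le huv, v.isLt, hu, ?_, ?_⟩
    · unfold IsCut
      convert hv.compl using 2
      ext x
      simp only [mem_ofPred_eq, mem_compl_iff, Fin.lt_def, not_lt]
      omega
    · ext x
      simp only [mem_preimage, mem_Ico, mem_Icc, Fin.le_def]
      omega
  · rintro ⟨c, d, hcd, hdn, hc, hd, rfl⟩
    refine ⟨⟨c, by omega⟩, ⟨d - 1, by omega⟩, Fin.mk_le_mk.2 (by omega), ?_, ?_, hc, ?_⟩
    · ext x
      simp only [mem_preimage, mem_Ico, mem_Icc, Fin.le_def]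
      omega
    · convert hd.inter hc.compl using 1
      ext x
      simp only [mem_preimage, mem_Ico, mem_inter_iff, mem_ofPred_eq, mem_compl_iff]
      omega
    · convert hd.compl using 1
      ext x
      simp only [mem_ofPred_eq, mem_compl_iff, Fin.lt_def]
      omega

theorem IsSection.permClosed (h : IsSection σ I) : PermClosed σ I := by
  obtain ⟨-, -, -, -, h, -⟩ := h
  exact h

theorem IsSection.nonempty (h : IsSection σ I) : I.Nonempty := by
  obtain ⟨u, v, huv, rfl, -⟩ := h
  exact nonempty_Icc.2 huv

theorem IsSection.inter (hI : IsSection σ I) (hK : IsSection σ K) (h : (I ∩ K).Nonempty) :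
    IsSection σ (I ∩ K) := by
  obtain ⟨c, d, -, hdn, hc, hd, rfl⟩ := isSection_iff_exists_isCut.1 hI
  obtain ⟨c', d', -, -, hc', hd', rfl⟩ := isSection_iff_exists_isCut.1 hK
  rw [← preimage_inter, Ico_inter_Ico] at h ⊢
  obtain ⟨x, hx⟩ := h
  refine isSection_iff_exists_isCut.2 ⟨_, _, hx.1.trans_lt hx.2, min_le_of_left_le hdn, ?_, ?_, rfl⟩
  · rcases max_choice c c' with h | h <;> rw [h] <;> assumption
  · rcases min_choice d d' with h | h <;> rw [h] <;> assumption

theorem exists_isSection_mem_ssubset {c d e : ℕ} (hc : IsCut σ c) (hd : IsCut σ d)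
    (he : IsCut σ e) (hce : c < e) (hed : e < d) (hdn : d ≤ n) {x : Fin n}
    (hx : x ∈ Fin.val ⁻¹' Ico c d) :
    ∃ K, IsSection σ K ∧ x ∈ K ∧ K ⊂ Fin.val ⁻¹' Ico c d := by
  rcases lt_or_ge (x : ℕ) e with hxe | hex
  · refine ⟨_, isSection_iff_exists_isCut.2 ⟨c, e, hce, by omega, hc, he, rfl⟩, ⟨hx.1, hxe⟩,
      ssubset_iff_of_subset (preimage_mono (Ico_subset_Ico_right hed.le)) |>.2
        ⟨⟨e, by omega⟩, ⟨hce.le, hed⟩, fun h => (lt_irrefl e h.2)⟩⟩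
  · refine ⟨_, isSection_iff_exists_isCut.2 ⟨e, d, hed, hdn, he, hd, rfl⟩, ⟨hex, hx.2⟩,
      ssubset_iff_of_subset (preimage_mono (Ico_subset_Ico_left hce.le)) |>.2
        ⟨⟨c, by omega⟩, ⟨le_rfl, hce.trans hed⟩, fun h => (lt_irrefl c (hce.trans_le h.1))⟩⟩

theorem IsSegment.subset_of_isSection (hI : IsSegment σ I) (hK : IsSection σ K)
    (h : (I ∩ K).Nonempty) : I ⊆ K := by
  rw [← hI.2 _ (hI.1.inter hK h) inter_subset_left]
  exact inter_subset_right

variable (σ)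

theorem pairwiseDisjoint_seg : (Seg σ).PairwiseDisjoint id := by
  intro I hI K hK hIK
  by_contra h
  rw [Function.onFun, id, id, not_disjoint_iff_nonempty_inter] at h
  exact hIK ((hI.subset_of_isSection hK.1 h).antisymm
    (hK.subset_of_isSection hI.1 (inter_comm I K ▸ h)))

theorem exists_isSegment_mem (x : Fin n) : ∃ I, IsSegment σ I ∧ x ∈ I := by
  have huniv : IsSection σ univ := isSection_iff_exists_isCut.2
    ⟨0, n, x.pos, le_rfl, fun _ h => absurd h (Nat.not_lt_zero _), fun i _ => (σ i).isLt,
      by ext; simp⟩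
  obtain ⟨M, ⟨hM, hxM⟩, hmin⟩ :=
    (toFinite {I | IsSection σ I ∧ x ∈ I}).exists_minimal ⟨univ, huniv, trivial⟩
  refine ⟨M, ⟨hM, fun J hJ hJM => ?_⟩, hxM⟩
  by_cases hxJ : x ∈ J
  · exact hJM.antisymm (hmin ⟨hJ, hxJ⟩ hJM)
  exfalso
  obtain ⟨c, d, -, hdn, hc, hd, rfl⟩ := isSection_iff_exists_isCut.1 hM
  obtain ⟨a, b, hab, hbn, ha, hb, rfl⟩ := isSection_iff_exists_isCut.1 hJ
  have hcb : c < b := (hJM (show (⟨b - 1, by omega⟩ : Fin n) ∈ Fin.val ⁻¹' Ico a b from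
    ⟨by dsimp only; omega, by dsimp only; omega⟩)).1.trans_lt (by dsimp only; omega)
  have had : a < d := (hJM (show (⟨a, by omega⟩ : Fin n) ∈ Fin.val ⁻¹' Ico a b from
    ⟨le_rfl, hab⟩)).2
  obtain ⟨K, hK, hxK, hKM⟩ : ∃ K, IsSection σ K ∧ x ∈ K ∧ K ⊂ Fin.val ⁻¹' Ico c d := by
    rcases lt_or_ge (x : ℕ) a with hxa | hax
    · exact exists_isSection_mem_ssubset hc hd ha (hxM.1.trans_lt hxa) had hdn hxM
    · have hxb : b ≤ x := by
        simp only [mem_preimage, mem_Ico, not_and, not_lt] at hxJ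
        exact hxJ hax
      exact exists_isSection_mem_ssubset hc hd hb hcb (hxb.trans_lt hxM.2) hdn hxM
  exact hKM.2 (hmin ⟨hK, hxK⟩ hKM.1)

end Sections

section Cover

variable {n : ℕ} {σ μ : Perm (Fin n)} {ι : Type*} {J : ι → Set (Fin n)}

theorem permClosed_iff_of_cover (hJ : ∀ i, PermClosed σ (J i)) (hcover : ⋃ i, J i = univ)
    (hμ : ∀ i, EqOn μ σ (J i) ∨ EqOn μ ⇑σ⁻¹ (J i)) {I : Set (Fin n)} :
    PermClosed σ I ↔ PermClosed μ I := by
  have pointwise {α β : Perm (Fin n)} (h : ∀ i, EqOn α β (J i) ∨ EqOn α ⇑β⁻¹ (J i)) (k : Fin n) :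
      α k = β k ∨ α k = β⁻¹ k := by
    obtain ⟨i, hk⟩ := mem_iUnion.1 (hcover.symm ▸ mem_univ k)
    exact (h i).imp (· hk) (· hk)
  exact ⟨(·.of_forall_eq_or_eq_inv (pointwise hμ)),
    (·.of_forall_eq_or_eq_inv (pointwise fun i => (hJ i).eqOn_or_eqOn_inv_swap (hμ i)))⟩

theorem seg_eq_of_cover (hJ : ∀ i, PermClosed σ (J i)) (hcover : ⋃ i, J i = univ)
    (hμ : ∀ i, EqOn μ σ (J i) ∨ EqOn μ ⇑σ⁻¹ (J i)) : Seg σ = Seg μ := by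
  have : IsSection σ = IsSection μ := by
    funext I
    simp only [IsSection, permClosed_iff_of_cover hJ hcover hμ]
  simp only [Seg, IsSegment, this]

end Cover

/-- `(σ, μ) ∈ ρ` iff `{1,…,n}` is the union of pairwise disjoint sections
`J₁, …, J_t` of `σ` on each of which `μ` coincides with `σ` or with `σ⁻¹`. -/
theorem rho_iff_disjoint_sections {n : ℕ} (σ μ : Equiv.Perm (Fin n)) :
    Rho σ μ ↔
      ∃ (t : ℕ) (J : Fin t → Set (Fin n)),
        (∀ i, IsSection σ (J i)) ∧
        (∀ i j, i ≠ j → Disjoint (J i) (J j)) ∧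
        (⋃ i, J i) = Set.univ ∧
        ∀ i, (∀ k ∈ J i, μ k = σ k) ∨ (∀ k ∈ J i, μ k = σ⁻¹ k) := by
  constructor
  · rintro ⟨-, hρ⟩
    obtain ⟨t, ⟨e⟩⟩ := Finite.exists_equiv_fin (Seg σ)
    refine ⟨t, fun i => e.symm i, fun i => (e.symm i).2.1,
      fun i j hij => pairwiseDisjoint_seg σ (e.symm i).2 (e.symm j).2
        (Subtype.coe_injective.ne (e.symm.injective.ne hij)),
      eq_univ_of_forall fun x => ?_, fun i => hρ _ (e.symm i).2⟩
    obtain ⟨I, hI, hxI⟩ := exists_isSegment_mem σ x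
    exact mem_iUnion.2 ⟨e ⟨I, hI⟩, by simpa using hxI⟩
  · rintro ⟨t, J, hJ, -, hcover, hμ⟩
    refine ⟨seg_eq_of_cover (fun i => (hJ i).permClosed) hcover hμ, fun I hI => ?_⟩
    obtain ⟨x, hxI⟩ := hI.1.nonempty
    obtain ⟨i, hxi⟩ := mem_iUnion.1 (hcover.symm ▸ mem_univ x)
    have hIJ := hI.subset_of_isSection (hJ i) ⟨x, hxI, hxi⟩
    exact (hμ i).imp (fun h k hk => h k (hIJ hk)) (fun h k hk => h k (hIJ hk))
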